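/- Let Θ be a finite set with at least two elements and m a mass function on Θ with belief function b and singleton plausibility pl. Then the minimum over all consistent mass functions m' on Θ (with belief function b') of the L∞ distance max_{∅ ⊊ A ⊊ Θ} |b(A) − b'(A)| equals min_{x ∈ Θ} b(Θ \ {x}) = 1 − max_{x ∈ Θ} pl(x); that is, the global L∞ consistent approximations in the belief space fall on the components associated with the maximal-plausibility elements. -/
import Mathlib


open Finset

variable {Θ : Type*}

/-- A mass function (basic probability assignment) on a finite frame `Θ`:
`m ∅ = 0`, nonnegative, and total mass one. -/
def IsMass [Fintype Θ] (m : Finset Θ → ℝ) : Prop :=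
  m ∅ = 0 ∧ (∀ A, 0 ≤ m A) ∧ ∑ A : Finset Θ, m A = 1

/-- The belief function of a mass function: `b(A) = ∑_{B ⊆ A} m(B)`. -/
def bel (m : Finset Θ → ℝ) (A : Finset Θ) : ℝ := ∑ B ∈ A.powerset, m B

/-- Singleton plausibility: `pl(x) = ∑_{B ∋ x} m(B)`. -/
def pl [Fintype Θ] [DecidableEq Θ] (m : Finset Θ → ℝ) (x : Θ) : ℝ :=
  ∑ B ∈ Finset.univ.filter (fun B => x ∈ B), m B

/-- The core of a mass function: the intersection of all its focal elements. -/
def core (m : Finset Θ → ℝ) : Set Θ := ⋂ A ∈ {A : Finset Θ | m A ≠ 0}, (A : Set Θ)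

/-- A mass function is consistent if its core is nonempty. -/
def Consistent (m : Finset Θ → ℝ) : Prop := (core m).Nonempty

/-- A mass function is focused on `x` if every focal element contains `x`. -/
def Focused (m : Finset Θ → ℝ) (x : Θ) : Prop := ∀ A, m A ≠ 0 → x ∈ A


section Aux
variable [Fintype Θ] [DecidableEq Θ]

lemma bel_nonneg (m : Finset Θ → ℝ) (hm : ∀ A, 0 ≤ m A) (A : Finset Θ) : 0 ≤ bel m A :=
  Finset.sum_nonneg fun B _ => hm B

lemma bel_mono (m : Finset Θ → ℝ) (hm : ∀ A, 0 ≤ m A) {A B : Finset Θ} (h : A ⊆ B) :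
    bel m A ≤ bel m B :=
  Finset.sum_le_sum_of_subset_of_nonneg (Finset.powerset_mono.2 h) fun C _ _ => hm C

lemma powerset_compl_singleton (x : Θ) :
    ({x}ᶜ : Finset Θ).powerset = Finset.univ.filter (fun B => x ∉ B) := by
  ext B
  simp only [Finset.mem_powerset, Finset.mem_filter, Finset.mem_univ, true_and]
  constructor
  · intro h hx
    have := h hx
    simp at this
  · intro h a ha
    simp only [Finset.mem_compl, Finset.mem_singleton]
    rintro rfl; exact h ha

lemma bel_compl_singleton (m : Finset Θ → ℝ) (htot : ∑ A : Finset Θ, m A = 1) (x : Θ) :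
    bel m ({x}ᶜ : Finset Θ) = 1 - pl m x := by
  rw [bel, pl, powerset_compl_singleton, ← htot,
    ← Finset.sum_filter_add_sum_filter_not Finset.univ (fun B => x ∈ B) m]
  ring

/-- Pushforward of a mass function by `· ∪ {x0}`. -/
noncomputable def push (m : Finset Θ → ℝ) (x0 : Θ) (B : Finset Θ) : ℝ :=
  ∑ A ∈ Finset.univ.filter (fun A => A ∪ {x0} = B), m A

lemma push_eq_zero (m : Finset Θ → ℝ) (x0 : Θ) {B : Finset Θ} (hB : x0 ∉ B) :
    push m x0 B = 0 := by
  apply Finset.sum_eq_zero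
  intro C hC
  exfalso
  apply hB
  rw [← (Finset.mem_filter.1 hC).2]
  simp

lemma push_isMass (m : Finset Θ → ℝ) (hm : IsMass m) (x0 : Θ) : IsMass (push m x0) := by
  refine ⟨push_eq_zero m x0 (by simp), fun B => Finset.sum_nonneg fun C _ => hm.2.1 C, ?_⟩
  rw [← hm.2.2]
  exact Finset.sum_fiberwise_of_maps_to (fun C _ => Finset.mem_univ _) m

lemma push_consistent (m : Finset Θ → ℝ) (x0 : Θ) : Consistent (push m x0) := by
  refine ⟨x0, ?_⟩
  rw [core, Set.mem_iInter₂]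
  intro A hA
  by_contra hx
  exact hA (push_eq_zero m x0 (by simpa using hx))

lemma bel_push (m : Finset Θ → ℝ) (x0 : Θ) (A : Finset Θ) :
    bel (push m x0) A = if x0 ∈ A then bel m A else 0 := by
  rw [bel]
  unfold push
  rw [Finset.sum_fiberwise_eq_sum_filter Finset.univ A.powerset (fun C => C ∪ {x0}) m]
  split_ifs with hx
  · rw [bel]
    apply Finset.sum_congr _ (fun _ _ => rfl)
    ext C
    simp only [Finset.mem_filter, Finset.mem_univ, true_and, Finset.mem_powerset,
      Finset.union_subset_iff, Finset.singleton_subset_iff]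
    tauto
  · apply Finset.sum_eq_zero
    intro C hC
    exfalso
    apply hx
    have := (Finset.mem_filter.1 hC).2
    rw [Finset.mem_powerset, Finset.union_subset_iff] at this
    simpa using this.2

end Aux

/-- The global L∞ consistent approximation in the belief space: the
minimal L∞ belief distance from `m` to the consistent mass functions equals
`min_x b({x}ᶜ) = 1 − max_x pl(x)`. -/
theorem stmt18 [Fintype Θ] [DecidableEq Θ] [Nonempty Θ] (hcard : 2 ≤ Fintype.card Θ)
    (m : Finset Θ → ℝ) (hm : IsMass m)
    (h2 : (Finset.univ.filter
      (fun A : Finset Θ => A ≠ ∅ ∧ A ≠ Finset.univ)).Nonempty) :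
    IsLeast {d : ℝ | ∃ m' : Finset Θ → ℝ, IsMass m' ∧ Consistent m' ∧
        d = (Finset.univ.filter (fun A : Finset Θ => A ≠ ∅ ∧ A ≠ Finset.univ)).sup' h2
              (fun A => |bel m A - bel m' A|)}
      (Finset.univ.inf' Finset.univ_nonempty
        (fun x : Θ => bel m ({x}ᶜ : Finset Θ))) ∧
    Finset.univ.inf' Finset.univ_nonempty (fun x : Θ => bel m ({x}ᶜ : Finset Θ)) =
      1 - Finset.univ.sup' Finset.univ_nonempty (pl m) := by
  have hmemA : ∀ y : Θ, ({y}ᶜ : Finset Θ) ∈ Finset.univ.filter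
      (fun A : Finset Θ => A ≠ ∅ ∧ A ≠ Finset.univ) := by
    intro y
    simp only [Finset.mem_filter, Finset.mem_univ, true_and]
    constructor
    · intro h
      obtain ⟨z, hz⟩ := Fintype.exists_ne_of_one_lt_card (by omega) y
      have : z ∈ ({y}ᶜ : Finset Θ) := by simpa using hz
      rw [h] at this
      simp at this
    · intro h
      have : y ∈ ({y}ᶜ : Finset Θ) := h ▸ Finset.mem_univ y
      simp at this
  constructor
  · constructor
    · -- membership: the optimal consistent approximation
      obtain ⟨x0, -, hx0⟩ := Finset.exists_mem_eq_inf' (Finset.univ_nonempty (α := Θ))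
        (fun x : Θ => bel m ({x}ᶜ : Finset Θ))
      refine ⟨push m x0, push_isMass m hm x0, push_consistent m x0, ?_⟩
      rw [hx0]
      apply le_antisymm
      · exact Finset.le_sup'_of_le _ (hmemA x0) (by
          rw [bel_push, if_neg (by simp), sub_zero,
            abs_of_nonneg (bel_nonneg m hm.2.1 _)])
      · apply Finset.sup'_le
        intro A hA
        rw [bel_push]
        split_ifs with hxA
        · simpa using bel_nonneg m hm.2.1 _
        · rw [sub_zero, abs_of_nonneg (bel_nonneg m hm.2.1 _)]
          apply bel_mono m hm.2.1
          intro a ha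
          simp only [Finset.mem_compl, Finset.mem_singleton]
          rintro rfl; exact hxA ha
    · -- lower bound
      rintro d ⟨m', hm', ⟨y, hy⟩, rfl⟩
      have hfoc : ∀ A, m' A ≠ 0 → y ∈ A := by
        intro A hA
        have := Set.mem_iInter₂.1 hy A hA
        exact_mod_cast this
      have hbel0 : bel m' ({y}ᶜ : Finset Θ) = 0 := by
        apply Finset.sum_eq_zero
        intro B hB
        by_contra h
        have hyB := hfoc B h
        have := Finset.mem_powerset.1 hB hyB
        simp at this
      calc Finset.univ.inf' Finset.univ_nonempty (fun x : Θ => bel m ({x}ᶜ : Finset Θ))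
          ≤ bel m ({y}ᶜ : Finset Θ) := Finset.inf'_le _ (Finset.mem_univ y)
        _ = |bel m ({y}ᶜ : Finset Θ) - bel m' ({y}ᶜ : Finset Θ)| := by
            rw [hbel0, sub_zero, abs_of_nonneg (bel_nonneg m hm.2.1 _)]
        _ ≤ _ := Finset.le_sup' (fun A => |bel m A - bel m' A|) (hmemA y)
  · -- the equality with plausibility
    apply le_antisymm
    · obtain ⟨x1, -, hx1⟩ := Finset.exists_mem_eq_sup' (Finset.univ_nonempty (α := Θ)) (pl m)
      rw [hx1, ← bel_compl_singleton m hm.2.2]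
      exact Finset.inf'_le _ (Finset.mem_univ x1)
    · apply Finset.le_inf'
      intro x _
      rw [bel_compl_singleton m hm.2.2]
      have : pl m x ≤ Finset.univ.sup' Finset.univ_nonempty (pl m) :=
        Finset.le_sup' _ (Finset.mem_univ x)
      linarith
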